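/- Let G be an α-regular finite simple graph whose girth is finite and equal to g (so g ≥ 3), and let k be an integer with 1 ≤ k ≤ α. If k ≤ g − 1 then M_G(k) = k·α − k + 1, and if g ≤ k ≤ g + ⌈g/2⌉ − 2 then M_G(k) = k·α − k. -/

import Mathlib

open SimpleGraph

/-- The number of edges of `G` incident to at least one vertex of `S`. -/
noncomputable def incidentEdgeCount {V : Type*} (G : SimpleGraph V) (S : Finset V) : ℕ :=
  {e ∈ G.edgeSet | ∃ v ∈ S, v ∈ e}.ncard

/-- `fileSize G k` is the minimum, over all `k`-element vertex sets `S`, of the number of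
edges of `G` incident to at least one vertex of `S`. -/
noncomputable def fileSize {V : Type*} (G : SimpleGraph V) (k : ℕ) : ℕ :=
  sInf { m | ∃ S : Finset V, S.card = k ∧ m = incidentEdgeCount G S }

/-!
In an `α`-regular graph, the edges meeting a vertex set `S` and the edges inside `S` together
count every edge at `S` once per endpoint in `S`, so their numbers add up to `|S| α`; hence
`M_G(k) = k α - max_{|S| = k} e(S)`, where `e(S)` is the number of edges inside `S`.

A graph with fewer vertices than its girth is a forest, so `e(S) ≤ |S| - 1` when `|S| < g`.
If `e(S) ≥ |S| + 1`, then `|S| + 1` edges inside `S` carry two different cycles `C₁`, `C₂`;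
all degrees of `C₁ ∆ C₂` are even, so it carries a third cycle `C₃`, and
`3 g ≤ |C₁| + |C₂| + |C₁ ∆ C₂| = 2 |C₁ ∪ C₂| ≤ 2 (|S| + 1)`. This gives `e(S) ≤ |S|` in the
second range. Both bounds are attained: starting from a vertex, resp. a shortest cycle, add a
neighbour outside the current set; while the set has at most `α` vertices such a neighbour
exists, and it brings a new inside edge.
-/

open Finset
open scoped symmDiff

namespace Finset

variable {α : Type*} [DecidableEq α]

theorem card_symmDiff_add_two_mul_card_inter (s t : Finset α) :
    #(s ∆ t) + 2 * #(s ∩ t) = #s + #t := by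
  rw [symmDiff_eq_sup_sdiff_inf, sup_eq_union, inf_eq_inter,
    card_sdiff_of_subset inter_subset_union, ← card_union_add_card_inter s t]
  have := card_le_card (inter_subset_union (s := s) (t := t))
  omega

theorem even_card_symmDiff {s t : Finset α} (hs : Even #s) (ht : Even #t) : Even #(s ∆ t) := by
  have := card_symmDiff_add_two_mul_card_inter s t
  rw [Nat.even_iff] at *
  omega

end Finset

namespace SimpleGraph

variable {V : Type*} {G : SimpleGraph V}

theorem Walk.IsCycle.length_le_card [Fintype V] {u : V} {c : G.Walk u u} (hc : c.IsCycle) :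
    c.length ≤ Fintype.card V := by
  simpa using hc.support_nodup.length_le_card

theorem Walk.IsCycle.card_support_toFinset [DecidableEq V] {u : V} {c : G.Walk u u}
    (hc : c.IsCycle) : #c.support.toFinset = c.length := by
  have hu : u ∈ c.support.tail := c.end_mem_tail_support hc.not_nil
  rw [← c.cons_tail_support, List.toFinset_cons, insert_eq_of_mem (List.mem_toFinset.2 hu),
    List.toFinset_card_of_nodup hc.support_nodup, List.length_tail, length_support]
  rfl

theorem Walk.IsTrail.card_edges_toFinset [DecidableEq V] {u v : V} {c : G.Walk u v}
    (hc : c.IsTrail) : #c.edges.toFinset = c.length := by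
  rw [List.toFinset_card_of_nodup hc.edges_nodup, length_edges]

theorem Walk.IsTrail.even_card_filter_mem_edges [DecidableEq V] {u : V} {c : G.Walk u u}
    (hc : c.IsTrail) (x : V) : Even #{e ∈ c.edges.toFinset | x ∈ e} := by
  have := (hc.even_countP_edges_iff x).2 (absurd rfl)
  rw [List.countP_eq_length_filter, ← List.toFinset_card_of_nodup (hc.edges_nodup.filter _),
    List.toFinset_filter] at this
  simpa using this

theorem edgeFinset_fromEdgeSet_of_subset [Fintype G.edgeSet] {D : Finset (Sym2 V)}
    [Fintype (fromEdgeSet (D : Set (Sym2 V))).edgeSet] (hD : D ⊆ G.edgeFinset) :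
    (fromEdgeSet (D : Set (Sym2 V))).edgeFinset = D := by
  ext e
  simp only [mem_edgeFinset, edgeSet_fromEdgeSet, Set.mem_sdiff, mem_coe, Sym2.mem_diagSet]
  exact ⟨And.left, fun he ↦ ⟨he, G.not_isDiag_of_mem_edgeSet (mem_edgeFinset.1 (hD he))⟩⟩

theorem exists_isCycle_edges_subset [DecidableEq V] [Fintype G.edgeSet] {D : Finset (Sym2 V)}
    (hD : D ⊆ G.edgeFinset) (h : ¬ (fromEdgeSet (D : Set (Sym2 V))).IsAcyclic) :
    ∃ (u : V) (c : G.Walk u u), c.IsCycle ∧ ∀ e ∈ c.edges, e ∈ D := by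
  have hHD := edgeFinset_fromEdgeSet_of_subset hD
  have hHG : fromEdgeSet (D : Set (Sym2 V)) ≤ G :=
    edgeFinset_subset_edgeFinset.1 (by rw [hHD]; exact hD)
  simp only [IsAcyclic, not_forall, not_not] at h
  obtain ⟨u, c, hc⟩ := h
  refine ⟨u, c.mapLe hHG, hc.mapLe hHG, fun e he ↦ ?_⟩
  rw [Walk.edges_mapLe_eq_edges] at he
  rw [← hHD, mem_edgeFinset]
  exact c.edges_subset_edgeSet he

section Finite

variable [Fintype V]

theorem IsAcyclic.card_edgeFinset_lt [Nonempty V] [Fintype G.edgeSet] (h : G.IsAcyclic) :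
    #G.edgeFinset < Fintype.card V := by
  obtain ⟨T, hGT, -, hT⟩ := connected_top.exists_isTree_le_of_le_of_isAcyclic le_top h
  classical
  calc #G.edgeFinset ≤ #T.edgeFinset := card_le_card (edgeFinset_mono hGT)
    _ < Fintype.card V := by rw [← hT.card_edgeFinset]; omega

theorem IsAcyclic.card_edgeFinset_lt_card_support [DecidableRel G.Adj] (h : G.IsAcyclic)
    (hG : G ≠ ⊥) : #G.edgeFinset < #G.support.toFinset := by
  obtain ⟨v, w, hvw⟩ : ∃ v w, G.Adj v w := by simpa [eq_bot_iff_forall_not_adj] using hG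
  have : Nonempty G.support := ⟨⟨v, w, hvw⟩⟩
  rw [← card_edgeFinset_induce_support, Set.toFinset_card]
  exact (h.embedding (Embedding.induce _)).card_edgeFinset_lt

theorem isAcyclic_of_card_lt_egirth (h : (Fintype.card V : ℕ∞) < G.egirth) : G.IsAcyclic :=
  fun _ c hc ↦ (egirth_le_length hc).not_gt <| h.trans_le' (by exact_mod_cast hc.length_le_card)

theorem not_isAcyclic_of_forall_even_degree [DecidableRel G.Adj]
    (heven : ∀ v, Even (G.degree v)) (hG : G ≠ ⊥) : ¬ G.IsAcyclic := by
  intro h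
  have htwo : ∀ v ∈ G.support.toFinset, 2 ≤ G.degree v := by
    intro v hv
    have hpos := (G.degree_pos_iff_mem_support v).2 (Set.mem_toFinset.1 hv)
    obtain ⟨m, hm⟩ := heven v
    omega
  have hsum := card_nsmul_le_sum _ _ _ htwo
  rw [sum_degrees_support_eq_twice_card_edges, smul_eq_mul] at hsum
  have := h.card_edgeFinset_lt_card_support hG
  omega

variable [DecidableEq V] [Fintype G.edgeSet]

theorem exists_isCycle_edges_subset_of_even {D : Finset (Sym2 V)} (hD : D ⊆ G.edgeFinset)
    (hne : D.Nonempty) (heven : ∀ x, Even #{e ∈ D | x ∈ e}) :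
    ∃ (u : V) (c : G.Walk u u), c.IsCycle ∧ ∀ e ∈ c.edges, e ∈ D := by
  have hHD := edgeFinset_fromEdgeSet_of_subset hD
  refine exists_isCycle_edges_subset hD (not_isAcyclic_of_forall_even_degree (fun x ↦ ?_) ?_)
  · rw [← card_incidenceFinset_eq_degree, incidenceFinset_eq_filter, hHD]
    exact heven x
  · rw [← edgeFinset_nonempty, hHD]
    exact hne

theorem exists_isCycle_edges_subset_symmDiff {u₁ u₂ : V} {c₁ : G.Walk u₁ u₁}
    {c₂ : G.Walk u₂ u₂} (hc₁ : c₁.IsTrail) (hc₂ : c₂.IsTrail)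
    (hne : c₁.edges.toFinset ≠ c₂.edges.toFinset) :
    ∃ (u : V) (c : G.Walk u u), c.IsCycle ∧
      ∀ e ∈ c.edges, e ∈ c₁.edges.toFinset ∆ c₂.edges.toFinset := by
  refine exists_isCycle_edges_subset_of_even ?_ (symmDiff_nonempty.2 hne) fun x ↦ ?_
  · refine symmDiff_subset_union.trans (union_subset ?_ ?_) <;>
      exact fun e he ↦ mem_edgeFinset.2 (Walk.edges_subset_edgeSet _ (List.mem_toFinset.1 he))
  · have hfilter : {e ∈ c₁.edges.toFinset ∆ c₂.edges.toFinset | x ∈ e} =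
        {e ∈ c₁.edges.toFinset | x ∈ e} ∆ {e ∈ c₂.edges.toFinset | x ∈ e} := by
      ext
      simp only [mem_filter, mem_symmDiff]
      tauto
    rw [hfilter]
    exact even_card_symmDiff (hc₁.even_card_filter_mem_edges x) (hc₂.even_card_filter_mem_edges x)

theorem three_mul_le_two_mul_card_add_one {g : ℕ} (hg : (g : ℕ∞) ≤ G.egirth)
    (hcard : Fintype.card V < #G.edgeFinset) : 3 * g ≤ 2 * (Fintype.card V + 1) := by
  have hlen {u : V} {c : G.Walk u u} (hc : c.IsCycle) : g ≤ c.length := by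
    exact_mod_cast hg.trans (egirth_le_length hc)
  obtain ⟨D, hDG, hD⟩ := exists_subset_card_eq (Nat.succ_le_of_lt hcard)
  obtain ⟨e₀, -⟩ : D.Nonempty := card_pos.1 (by omega)
  have : Nonempty V := ⟨e₀.out.1⟩
  obtain ⟨u₁, c₁, hc₁, hc₁D⟩ := exists_isCycle_edges_subset hDG fun h ↦ by
    have := h.card_edgeFinset_lt
    rw [edgeFinset_fromEdgeSet_of_subset hDG] at this
    omega
  obtain ⟨e, he⟩ : ∃ e, e ∈ c₁.edges :=
    List.exists_mem_of_length_pos (by rw [Walk.length_edges]; have := hc₁.three_le_length; omega)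
  have hD₂ : D.erase e ⊆ G.edgeFinset := (erase_subset e D).trans hDG
  obtain ⟨u₂, c₂, hc₂, hc₂D⟩ := exists_isCycle_edges_subset hD₂ fun h ↦ by
    have := h.card_edgeFinset_lt
    rw [edgeFinset_fromEdgeSet_of_subset hD₂, card_erase_of_mem (hc₁D e he)] at this
    omega
  obtain ⟨u₃, c₃, hc₃, hc₃D⟩ := exists_isCycle_edges_subset_symmDiff hc₁.isTrail hc₂.isTrail
    fun h ↦ notMem_erase e D <| hc₂D e <| List.mem_toFinset.1 <| h ▸ List.mem_toFinset.2 he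
  set E₁ := c₁.edges.toFinset
  set E₂ := c₂.edges.toFinset
  have h₁ : #E₁ = c₁.length := hc₁.isTrail.card_edges_toFinset
  have h₂ : #E₂ = c₂.length := hc₂.isTrail.card_edges_toFinset
  have h₃ : c₃.length ≤ #(E₁ ∆ E₂) := by
    rw [← hc₃.isTrail.card_edges_toFinset]
    exact card_le_card fun x hx ↦ hc₃D x (List.mem_toFinset.1 hx)
  have hunion : #(E₁ ∪ E₂) ≤ #D := card_le_card <| union_subset
    (fun x hx ↦ hc₁D x (List.mem_toFinset.1 hx))
    (fun x hx ↦ mem_of_mem_erase (hc₂D x (List.mem_toFinset.1 hx)))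
  have := card_symmDiff_add_two_mul_card_inter E₁ E₂
  have := card_union_add_card_inter E₁ E₂
  have := hlen hc₁
  have := hlen hc₂
  have := hlen hc₃
  omega

end Finite

section VertexSets

variable [Fintype V] [DecidableEq V] [DecidableRel G.Adj]

theorem card_edgeFinset_induce (S : Finset V) :
    #(G.induce (S : Set V)).edgeFinset = #(G.edgeFinset ∩ S.sym2) := by
  rw [← filter_edgeFinset_toFinset_subset, card_filter_edgeFinset_toFinset_subset]

theorem card_edgeFinset_inter_sym2_lt {S : Finset V} (hS : S.Nonempty)
    (h : (#S : ℕ∞) < G.egirth) : #(G.edgeFinset ∩ S.sym2) < #S := by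
  have : Nonempty (S : Set V) := hS.to_subtype
  have hcard : Fintype.card (S : Set V) = #S := Fintype.card_coe S
  rw [← card_edgeFinset_induce, ← hcard]
  refine (isAcyclic_of_card_lt_egirth ?_).card_edgeFinset_lt
  rw [hcard]
  exact h.trans_le (Embedding.induce _).isContained.egirth_le

theorem three_mul_le_of_card_lt_card_edgeFinset_inter_sym2 {S : Finset V} {g : ℕ}
    (hg : (g : ℕ∞) ≤ G.egirth) (h : #S < #(G.edgeFinset ∩ S.sym2)) : 3 * g ≤ 2 * (#S + 1) := by
  have hcard : Fintype.card (S : Set V) = #S := Fintype.card_coe S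
  rw [← card_edgeFinset_induce, ← hcard] at h
  rw [← hcard]
  exact three_mul_le_two_mul_card_add_one (hg.trans (Embedding.induce _).isContained.egirth_le) h

theorem Walk.IsCycle.length_le_card_edgeFinset_inter_sym2 {u : V} {c : G.Walk u u}
    (hc : c.IsCycle) : c.length ≤ #(G.edgeFinset ∩ c.support.toFinset.sym2) := by
  rw [← hc.isTrail.card_edges_toFinset]
  refine card_le_card fun e he ↦ ?_
  rw [List.mem_toFinset] at he
  exact mem_inter.2 ⟨mem_edgeFinset.2 (c.edges_subset_edgeSet he),
    mem_sym2_iff.2 fun a ha ↦ List.mem_toFinset.2 (c.mem_support_of_mem_edges he ha)⟩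

theorem exists_card_edgeFinset_inter_sym2_lt_insert {S : Finset V} {v : V} (hv : v ∈ S)
    (hdeg : #S ≤ G.degree v) :
    ∃ w ∉ S, #(G.edgeFinset ∩ S.sym2) < #(G.edgeFinset ∩ (insert w S).sym2) := by
  obtain ⟨w, hw, hwS⟩ : ∃ w ∈ G.neighborFinset v, w ∉ S := by
    by_contra! h
    have hsub : G.neighborFinset v ⊆ S.erase v := fun w hw ↦
      mem_erase.2 ⟨(G.ne_of_adj ((mem_neighborFinset _ _ _).1 hw)).symm, h w hw⟩
    have := card_le_card hsub
    rw [card_neighborFinset_eq_degree, card_erase_of_mem hv] at this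
    have := card_pos.2 ⟨v, hv⟩
    omega
  refine ⟨w, hwS, card_lt_card <| (ssubset_iff_of_subset ?_).2 ⟨s(v, w), ?_, ?_⟩⟩
  · exact inter_subset_inter_left (sym2_mono (subset_insert w S))
  · exact mem_inter.2 ⟨mem_edgeFinset.2 ((mem_neighborFinset _ _ _).1 hw),
      mk_mem_sym2_iff.2 ⟨mem_insert_of_mem hv, mem_insert_self w S⟩⟩
  · exact fun h ↦ hwS (mk_mem_sym2_iff.1 (mem_inter.1 h).2).2

theorem IsRegularOfDegree.exists_card_eq_le_card_edgeFinset_inter_sym2 {α : ℕ}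
    (hreg : G.IsRegularOfDegree α) {S : Finset V} (hS : S.Nonempty) (m : ℕ)
    (hm : #S + m ≤ α + 1) :
    ∃ T : Finset V, #T = #S + m ∧ #(G.edgeFinset ∩ S.sym2) + m ≤ #(G.edgeFinset ∩ T.sym2) := by
  induction m generalizing S with
  | zero => exact ⟨S, rfl, le_rfl⟩
  | succ m ih =>
    obtain ⟨v, hv⟩ := hS
    obtain ⟨w, hw, hlt⟩ := exists_card_edgeFinset_inter_sym2_lt_insert hv (by rw [hreg v]; omega)
    obtain ⟨T, hT, hle⟩ := ih (insert_nonempty w S) (by rw [card_insert_of_notMem hw]; omega)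
    rw [card_insert_of_notMem hw] at hT
    exact ⟨T, by omega, by omega⟩

theorem incidentEdgeCount_add_card_edgeFinset_inter_sym2 (S : Finset V) :
    incidentEdgeCount G S + #(G.edgeFinset ∩ S.sym2) = ∑ v ∈ S, G.degree v := by
  have hedge : ∀ e ∈ G.edgeFinset, #{v ∈ S | v ∈ e} =
      (if ∃ v ∈ S, v ∈ e then 1 else 0) + if e ∈ S.sym2 then 1 else 0 := by
    intro e he
    induction e with | _ a b =>
      have hab : a ≠ b := G.ne_of_adj (mem_edgeFinset.1 he)
      have hmeet : (∃ v ∈ S, v ∈ s(a, b)) ↔ a ∈ S ∨ b ∈ S := by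
        simp only [Sym2.mem_iff, and_or_left, exists_or, exists_eq_right]
      rw [if_congr hmeet rfl rfl]
      by_cases ha : a ∈ S <;> by_cases hb : b ∈ S <;>
        simp [Sym2.mem_iff, filter_or, filter_eq', ha, hb, hab]
  have hincident : incidentEdgeCount G S = #{e ∈ G.edgeFinset | ∃ v ∈ S, v ∈ e} := by
    rw [incidentEdgeCount, ← Set.ncard_coe_finset]
    congr 1
    ext
    simp
  calc incidentEdgeCount G S + #(G.edgeFinset ∩ S.sym2)
      = ∑ e ∈ G.edgeFinset, ((if ∃ v ∈ S, v ∈ e then 1 else 0) + if e ∈ S.sym2 then 1 else 0) := by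
        rw [sum_add_distrib, ← card_filter, ← card_filter, hincident, filter_mem_eq_inter]
    _ = ∑ e ∈ G.edgeFinset, #{v ∈ S | v ∈ e} := (sum_congr rfl hedge).symm
    _ = ∑ v ∈ S, #{e ∈ G.edgeFinset | v ∈ e} :=
        (sum_card_bipartiteAbove_eq_sum_card_bipartiteBelow (fun v e ↦ v ∈ e)).symm
    _ = ∑ v ∈ S, G.degree v := by
        simp_rw [← incidenceFinset_eq_filter, card_incidenceFinset_eq_degree]

theorem fileSize_eq_sub {α k t : ℕ} (hreg : G.IsRegularOfDegree α)
    (hle : ∀ S : Finset V, #S = k → #(G.edgeFinset ∩ S.sym2) ≤ t)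
    (hex : ∃ S : Finset V, #S = k ∧ t ≤ #(G.edgeFinset ∩ S.sym2)) :
    fileSize G k = k * α - t := by
  have hcount (S : Finset V) : incidentEdgeCount G S + #(G.edgeFinset ∩ S.sym2) = #S * α := by
    rw [incidentEdgeCount_add_card_edgeFinset_inter_sym2, sum_congr rfl fun v _ ↦ hreg v,
      sum_const, smul_eq_mul]
  obtain ⟨S₀, rfl, ht⟩ := hex
  have hmem : #S₀ * α - t ∈ {m | ∃ S : Finset V, #S = #S₀ ∧ m = incidentEdgeCount G S} :=
    ⟨S₀, rfl, by have := hcount S₀; have := hle S₀ rfl; omega⟩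
  refine le_antisymm (Nat.sInf_le hmem) (le_csInf ⟨_, hmem⟩ ?_)
  rintro _ ⟨S, hS, rfl⟩
  have := hcount S
  have := hle S hS
  rw [hS] at *
  omega

end VertexSets

end SimpleGraph

theorem stmt8 {V : Type*} [Fintype V] (G : SimpleGraph V) [DecidableRel G.Adj]
    (α g k : ℕ) (hreg : G.IsRegularOfDegree α) (hg : G.egirth = (g : ℕ∞))
    (hk1 : 1 ≤ k) (hk : k ≤ α) :
    (k ≤ g - 1 → fileSize G k = k * α - k + 1) ∧
    (g ≤ k → k ≤ g + (g + 1) / 2 - 2 → fileSize G k = k * α - k) := by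
  classical
  have hcyclic : ¬ G.IsAcyclic := fun h ↦ ENat.natCast_ne_top g (hg ▸ h.egirth_eq_top)
  obtain ⟨a, c, hc, hlen⟩ := exists_egirth_eq_length.2 hcyclic
  have hcg : c.length = g := by exact_mod_cast hlen.symm.trans hg
  constructor
  · intro hkg
    have hkg' : k < g := by omega
    have hkα : k ≤ k * α := Nat.le_mul_of_pos_right k (by omega)
    rw [fileSize_eq_sub hreg (t := k - 1)]
    · omega
    · intro S hS
      have := card_edgeFinset_inter_sym2_lt (S := S) (card_pos.1 (by omega))
        (by rw [hg, hS]; exact_mod_cast hkg')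
      omega
    · obtain ⟨T, hT, hle⟩ := hreg.exists_card_eq_le_card_edgeFinset_inter_sym2
        (singleton_nonempty a) (k - 1) (by rw [card_singleton]; omega)
      exact ⟨T, by rw [hT, card_singleton]; omega, by omega⟩
  · intro hgk hkg
    rw [fileSize_eq_sub hreg (t := k)]
    · intro S hS
      by_contra! h
      have := three_mul_le_of_card_lt_card_edgeFinset_inter_sym2 hg.ge (hS ▸ h)
      omega
    · have hsupp := hc.card_support_toFinset
      obtain ⟨T, hT, hle⟩ := hreg.exists_card_eq_le_card_edgeFinset_inter_sym2
        ⟨a, List.mem_toFinset.2 c.start_mem_support⟩ (k - g) (by rw [hsupp]; omega)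
      have := hc.length_le_card_edgeFinset_inter_sym2
      exact ⟨T, by omega, by omega⟩
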